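/- arXiv:2101.12722 — 3 statements merged into one kernel-verified Lean document; each statement's English description precedes it below -/
import Mathlib

section
/- Fix integers n ≥ d ≥ 2 and w with d-1 ≤ w ≤ n, and let B : ℕ → ℤ be any function. Then ∑_{j=w-d+2}^{w} (-1)^j * ∑_{v=0}^{w-j} C(j+n-w, j) * C(n-v, w-j-v) * B(v) equals (-1)^{w-d} * ∑_{v=0}^{d-2} C(n-v, w-v) * C(w-1-v, d-2-v) * B(v). -/
/-!
Exchange the two sums, so that `B v` is multiplied by an alternating sum over `j`. Reversing
that sum (`i = w - v - j`) and using `C(m, i) C(m - i, a - i) = C(m, a) C(a, i)` turns it into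
`C(n - v, w - v)` times a partial alternating sum of a row of Pascal's triangle, and
`∑_{i ≤ k} (-1)^i C(a, i) = (-1)^k C(a - 1, k)`.
-/

open Finset

theorem Int.alternating_sum_range_choose_mul_choose {m a k : ℕ} (hk : k < a) :
    ∑ i ∈ Finset.range (k + 1), (-1 : ℤ) ^ i * ((m.choose i : ℤ) * (m - i).choose (a - i)) =
      (-1) ^ k * ((m.choose a : ℤ) * (a - 1).choose k) := by
  have subset_choose : ∀ i ∈ Finset.range (k + 1),
      (-1 : ℤ) ^ i * ((m.choose i : ℤ) * (m - i).choose (a - i)) =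
        m.choose a * ((-1) ^ i * (a - 1 + 1).choose i) := by
    intro i hi
    rw [mem_range] at hi
    rw [Nat.sub_add_cancel (by omega : 1 ≤ a), ← Nat.cast_mul, ← Nat.choose_mul (by omega)]
    push_cast
    ring
  rw [sum_congr rfl subset_choose, ← mul_sum, Int.alternating_sum_range_choose_eq_choose]
  ring

theorem sum_Icc_neg_one_pow_mul_choose_mul_choose {n d w v : ℕ} (hv : v < d - 1)
    (hw1 : d - 1 ≤ w) (hw2 : w ≤ n) :
    ∑ j ∈ Icc (w + 2 - d) (w - v),
        (-1 : ℤ) ^ j * ((j + n - w).choose j : ℤ) * (n - v).choose (w - j - v) =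
      (-1) ^ (w + d) * ((n - v).choose (w - v) : ℤ) * (w - 1 - v).choose (d - 2 - v) := by
  have reflect : ∑ j ∈ Icc (w + 2 - d) (w - v),
        (-1 : ℤ) ^ j * ((j + n - w).choose j : ℤ) * (n - v).choose (w - j - v) =
      ∑ i ∈ range (d - 2 - v + 1), (-1) ^ (w - v) *
        ((-1) ^ i * (((n - v).choose i : ℤ) * (n - v - i).choose (w - v - i))) := by
    refine sum_nbij' (fun j => w - v - j) (fun i => w - v - i) ?_ ?_ ?_ ?_ ?_
    · intro j hj; simp only [mem_Icc, mem_range] at hj ⊢; omega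
    · intro i hi; simp only [mem_Icc, mem_range] at hi ⊢; omega
    · intro j hj; rw [mem_Icc] at hj; omega
    · intro i hi; rw [mem_range] at hi; omega
    · intro j hj
      rw [mem_Icc] at hj
      have sign : (-1 : ℤ) ^ (w - v) * (-1) ^ (w - v - j) = (-1) ^ j := by
        rw [← pow_add]; exact neg_one_pow_congr (by simp only [Nat.even_iff]; omega)
      rw [show n - v - (w - v - j) = j + n - w by omega, show w - v - (w - v - j) = j by omega,
        show w - j - v = w - v - j by omega, ← sign]
      ring
  rw [reflect, ← mul_sum, Int.alternating_sum_range_choose_mul_choose (by omega), ← mul_assoc,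
    ← pow_add, show w - v - 1 = w - 1 - v by omega, ← mul_assoc,
    neg_one_pow_congr (R := ℤ) (m := w - v + (d - 2 - v)) (n := w + d)
      (by simp only [Nat.even_iff]; omega)]

theorem bonneau_second_part_general (n d w : ℕ) (B : ℕ → ℤ)
    (hw1 : d - 1 ≤ w) (hw2 : w ≤ n) :
    ∑ j ∈ Finset.Icc (w + 2 - d) w, (-1 : ℤ) ^ j *
        ∑ v ∈ Finset.range (w - j + 1),
          ((j + n - w).choose j : ℤ) * ((n - v).choose (w - j - v) : ℤ) * B v =
      (-1 : ℤ) ^ (w + d) *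
        ∑ v ∈ Finset.range (d - 1),
          ((n - v).choose (w - v) : ℤ) * ((w - 1 - v).choose (d - 2 - v) : ℤ) * B v := by
  simp only [mul_sum]
  rw [sum_comm' (t' := range (d - 1)) (s' := fun v => Icc (w + 2 - d) (w - v))
    (fun j v => by simp only [mem_Icc, mem_range]; omega)]
  refine sum_congr rfl fun v hv => ?_
  simp only [← mul_assoc]
  rw [← sum_mul, sum_Icc_neg_one_pow_mul_choose_mul_choose (mem_range.mp hv) hw1 hw2]

/-- Lemma 3.2 (key combinatorial step transforming the Bonneau formula):
for `n ≥ d ≥ 2`, `d-1 ≤ w ≤ n`, and any `B : ℕ → ℤ`,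
`∑_{j=w-d+2}^{w} (-1)^j ∑_{v=0}^{w-j} C(j+n-w, j) C(n-v, w-j-v) B(v)
  = (-1)^{w-d} ∑_{v=0}^{d-2} C(n-v, w-v) C(w-1-v, d-2-v) B(v)`.
(The sign `(-1)^{w-d}` is written as `(-1)^{w+d}`, which has the same parity
and is meaningful also for `w = d - 1`.) -/
theorem bonneau_second_part (n d w : ℕ) (B : ℕ → ℤ) (hd : 2 ≤ d) (hdn : d ≤ n)
    (hw1 : d - 1 ≤ w) (hw2 : w ≤ n) :
    ∑ j ∈ Finset.Icc (w + 2 - d) w, (-1 : ℤ) ^ j *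
        ∑ v ∈ Finset.range (w - j + 1),
          ((j + n - w).choose j : ℤ) * ((n - v).choose (w - j - v) : ℤ) * B v =
      (-1 : ℤ) ^ (w + d) *
        ∑ v ∈ Finset.range (d - 1),
          ((n - v).choose (w - v) : ℤ) * ((w - 1 - v).choose (d - 2 - v) : ℤ) * B v :=
  bonneau_second_part_general n d w B hw1 hw2
end

section
/- Let C be a linear [n,k,d]_q MDS code (d = n-k+1) with d ≥ 3, and let V be a coset of C of weight 1. Then the number of vectors of weight d-1 in V equals C(n-1, d-1). -/
/-!
Write the weight-one coset as `V = e + C` with `e = a • δᵢ`, `a ≠ 0`. For `c ∈ C` the vector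
`c + e` differs from `c` only at `i`; since `e` itself has weight `1 < d - 1`, `c ≠ 0` has weight
at least `d`, so `c + e` has weight `d - 1` exactly when `c` has weight `d` and `c i = -a`.
A minimum-weight codeword is determined by its support and one nonzero entry, since the
difference of two such has smaller support; and by the dimension count `dim C + d > n` every
`d`-set is the support of a codeword. Hence the weight-`(d - 1)` vectors of `V` correspond to
the `d`-subsets containing `i`.
-/

open Finset

variable {ι M : Type*} [Fintype ι] [AddGroup M] [DecidableEq M]

def hammingSupport (x : ι → M) : Finset ι := {j | x j ≠ 0}

@[simp]
lemma mem_hammingSupport {x : ι → M} {j : ι} : j ∈ hammingSupport x ↔ x j ≠ 0 := by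
  simp [hammingSupport]

lemma card_hammingSupport (x : ι → M) : #(hammingSupport x) = hammingNorm x := rfl

lemma hammingSupport_smul {R : Type*} [Zero R] [SMulWithZero R M] {r : R}
    (hr : IsSMulRegular M r) (c : ι → M) : hammingSupport (r • c) = hammingSupport c := by
  ext j
  simpa using (hr.eq_iff (a := c j) (b := 0)).not

variable [DecidableEq ι]

lemma exists_eq_single_of_hammingNorm_eq_one {x : ι → M} (hx : hammingNorm x = 1) :
    ∃ i a, a ≠ 0 ∧ x = Pi.single i a := by
  obtain ⟨i, hi⟩ := card_eq_one.mp ((card_hammingSupport x).trans hx)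
  have hsupp (j : ι) : x j ≠ 0 ↔ j = i := by
    rw [← mem_hammingSupport, hi, mem_singleton]
  refine ⟨i, x i, (hsupp i).mpr rfl, funext fun j => ?_⟩
  by_cases hj : j = i
  · subst hj; simp
  · simpa [hj] using (hsupp j).not.mpr hj

lemma hammingSupport_add_single_of_apply_eq_neg {c : ι → M} {i : ι} {a : M} (h : c i = -a) :
    hammingSupport (c + Pi.single i a) = (hammingSupport c).erase i := by
  ext j
  by_cases hj : j = i
  · subst hj; simp [h]
  · simp [hj]

lemma hammingSupport_add_single_of_apply_ne_neg {c : ι → M} {i : ι} {a : M} (h : c i ≠ -a) :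
    hammingSupport (c + Pi.single i a) = insert i (hammingSupport c) := by
  ext j
  by_cases hj : j = i
  · subst hj; simpa [add_eq_zero_iff_eq_neg] using h
  · simp [hj]

variable {F : Type*} [Field F] [DecidableEq F] {C : Submodule F (ι → F)} {d : ℕ}

lemma hammingNorm_add_single_eq_pred_iff (hdmin : ∀ c ∈ C, c ≠ 0 → d ≤ hammingNorm c)
    (hd : 3 ≤ d) {c : ι → F} (hc : c ∈ C) {i : ι} {a : F} (ha : a ≠ 0) :
    hammingNorm (c + Pi.single i a) = d - 1 ↔ hammingNorm c = d ∧ c i = -a := by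
  constructor
  · intro hw
    have hc0 : c ≠ 0 := by
      rintro rfl
      rw [← card_hammingSupport,
        hammingSupport_add_single_of_apply_ne_neg (by simpa using ha)] at hw
      simp [hammingSupport] at hw
      omega
    have hdc := hdmin c hc hc0
    by_cases hci : c i = -a
    · have hi : i ∈ hammingSupport c := by simpa [hci] using ha
      rw [← card_hammingSupport, hammingSupport_add_single_of_apply_eq_neg hci,
        card_erase_of_mem hi, card_hammingSupport] at hw
      exact ⟨by omega, hci⟩
    · have hle := card_le_card (subset_insert i (hammingSupport c))
      rw [← hammingSupport_add_single_of_apply_ne_neg hci, card_hammingSupport,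
        card_hammingSupport] at hle
      omega
  · rintro ⟨hw, hci⟩
    have hi : i ∈ hammingSupport c := by simpa [hci] using ha
    rw [← card_hammingSupport, hammingSupport_add_single_of_apply_eq_neg hci,
      card_erase_of_mem hi, card_hammingSupport, hw]

lemma eq_of_hammingSupport_eq (hdmin : ∀ c ∈ C, c ≠ 0 → d ≤ hammingNorm c)
    {c₁ c₂ : ι → F} (hc₁ : c₁ ∈ C) (hc₂ : c₂ ∈ C) (hw : hammingNorm c₁ = d)
    (hsupp : hammingSupport c₁ = hammingSupport c₂) {i : ι} (hi : c₁ i ≠ 0)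
    (hi₂ : c₁ i = c₂ i) : c₁ = c₂ := by
  by_contra hne
  have hd := hdmin _ (C.sub_mem hc₁ hc₂) (sub_ne_zero.mpr hne)
  have hsub : hammingSupport (c₁ - c₂) ⊆ (hammingSupport c₁).erase i := by
    intro j hj
    rw [mem_hammingSupport, Pi.sub_apply, sub_ne_zero] at hj
    refine mem_erase.mpr ⟨by rintro rfl; exact hj hi₂, ?_⟩
    by_contra h₁
    have h₂ : j ∉ hammingSupport c₂ := hsupp ▸ h₁
    rw [mem_hammingSupport, not_not] at h₁ h₂
    exact hj (h₁.trans h₂.symm)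
  have hle := card_le_card hsub
  rw [card_erase_of_mem (mem_hammingSupport.mpr hi), card_hammingSupport,
    card_hammingSupport, hw] at hle
  have : 0 < d := hw ▸ hammingNorm_pos_iff.mpr fun h => hi (by simp [h])
  omega

lemma exists_mem_hammingSupport_eq {T : Finset ι}
    (hdmin : ∀ c ∈ C, c ≠ 0 → #T ≤ hammingNorm c)
    (hT : Fintype.card ι < Module.finrank F C + #T) :
    ∃ c ∈ C, hammingSupport c = T := by
  let restrict := (LinearMap.funLeft F F ((↑) : {j // j ∉ T} → ι)).comp C.subtype
  have hker : LinearMap.ker restrict ≠ ⊥ := LinearMap.ker_ne_bot_of_finrank_lt <| by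
    rw [Module.finrank_fintype_fun_eq_card, Fintype.card_subtype_compl, Fintype.card_coe]
    have := card_le_univ T
    omega
  obtain ⟨⟨c, hc⟩, hker, hc0⟩ := Submodule.exists_mem_ne_zero_of_ne_bot hker
  have hsub : hammingSupport c ⊆ T := fun j hj => by
    by_contra hjT
    exact mem_hammingSupport.mp hj (congrFun hker ⟨j, hjT⟩)
  refine ⟨c, hc, eq_of_subset_of_card_le hsub ?_⟩
  rw [card_hammingSupport]
  exact hdmin c hc (by simpa using hc0)

lemma card_codewords_hammingNorm_eq_apply_eq (hdmin : ∀ c ∈ C, c ≠ 0 → d ≤ hammingNorm c)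
    (hdim : Fintype.card ι < Module.finrank F C + d) (i : ι) {b : F} (hb : b ≠ 0) :
    Nat.card {c // c ∈ C ∧ hammingNorm c = d ∧ c i = b} =
      (Fintype.card ι - 1).choose (d - 1) := by
  have hd : 1 ≤ d := by
    have := C.finrank_le
    rw [Module.finrank_fintype_fun_eq_card] at this
    omega
  have hi (c : {c // c ∈ C ∧ hammingNorm c = d ∧ c i = b}) : i ∈ hammingSupport c.1 := by
    simpa [c.2.2.2] using hb
  rw [← card_singleton i, ← card_univ,
    ← card_filter_powersetCard_subset {i} univ d (subset_univ _) (by simpa using hd),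
    ← Nat.card_eq_finsetCard]
  refine Nat.card_eq_of_bijective (fun c => ⟨hammingSupport c.1, ?_⟩) ⟨?_, ?_⟩
  · simpa [mem_powersetCard, card_hammingSupport, c.2.2.1] using hi c
  · rintro c₁ c₂ h
    exact Subtype.ext <| eq_of_hammingSupport_eq hdmin c₁.2.1 c₂.2.1 c₁.2.2.1
      (congrArg Subtype.val h) (mem_hammingSupport.mp (hi c₁)) (c₁.2.2.2.trans c₂.2.2.2.symm)
  · rintro ⟨T, hT⟩
    simp only [mem_filter, mem_powersetCard, singleton_subset_iff] at hT
    obtain ⟨⟨-, hTd⟩, hiT⟩ := hT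
    obtain ⟨g, hg, hgT⟩ := exists_mem_hammingSupport_eq (hTd ▸ hdmin) (hTd ▸ hdim)
    have hgi : g i ≠ 0 := mem_hammingSupport.mp (hgT ▸ hiT)
    have hr : IsSMulRegular F (b / g i) := .of_ne_zero (div_ne_zero hb hgi)
    refine ⟨⟨(b / g i) • g, C.smul_mem _ hg, ?_, by simp [hgi]⟩, ?_⟩
    · rw [← card_hammingSupport, hammingSupport_smul hr g, hgT, hTd]
    · exact Subtype.ext (by simp only [hammingSupport_smul hr g, hgT])

theorem weight_one_coset_dminus1_count_general (n k d : ℕ) (F : Type) [Field F]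
    [DecidableEq F] (C : Submodule F (Fin n → F)) (hk : Module.finrank F C = k)
    (hmds : d = n - k + 1) (hd3 : 3 ≤ d)
    (hdmin : ∀ c ∈ C, c ≠ 0 → d ≤ hammingNorm c)
    (v : Fin n → F)
    (hW : IsLeast {w : ℕ | ∃ x : Fin n → F, x - v ∈ C ∧ hammingNorm x = w} 1) :
    Nat.card {x : Fin n → F // x - v ∈ C ∧ hammingNorm x = d - 1} =
      (n - 1).choose (d - 1) := by
  obtain ⟨e, he, hwe⟩ := hW.1
  obtain ⟨i, a, ha, rfl⟩ := exists_eq_single_of_hammingNorm_eq_one hwe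
  have hdim : Fintype.card (Fin n) < Module.finrank F C + d := by
    have := C.finrank_le
    simp only [Module.finrank_fintype_fun_eq_card, Fintype.card_fin] at this ⊢
    omega
  calc Nat.card {x : Fin n → F // x - v ∈ C ∧ hammingNorm x = d - 1}
      = Nat.card {c // c ∈ C ∧ hammingNorm c = d ∧ c i = -a} := by
        refine Nat.card_congr (Equiv.subtypeEquiv (Equiv.subRight (Pi.single i a)) fun x => ?_)
        have hcoset : x - v ∈ C ↔ x - Pi.single i a ∈ C := by
          rw [← sub_add_sub_cancel x (Pi.single i a) v]
          exact C.add_mem_iff_left he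
        rw [Equiv.subRight_apply, hcoset]
        exact and_congr_right fun hc => by
          rw [← hammingNorm_add_single_eq_pred_iff hdmin hd3 hc ha, sub_add_cancel]
    _ = (n - 1).choose (d - 1) := by
        rw [card_codewords_hammingNorm_eq_apply_eq hdmin hdim i (neg_ne_zero.mpr ha), Fintype.card_fin]

/-- Let `C` be an `[n,k,d]_q` MDS code (`d = n - k + 1`) with `d ≥ 3`, and let `V = v + C`
be a coset of weight 1. Then the number of vectors of weight `d-1` in `V` equals
`C(n-1, d-1)`. -/
theorem weight_one_coset_dminus1_count (n k d : ℕ) (F : Type) [Field F] [Fintype F]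
    [DecidableEq F] (C : Submodule F (Fin n → F)) (hk : Module.finrank F C = k)
    (hmds : d = n - k + 1) (hd3 : 3 ≤ d)
    (hdmin : ∀ c ∈ C, c ≠ 0 → d ≤ hammingNorm c)
    (hdex : ∃ c ∈ C, c ≠ 0 ∧ hammingNorm c = d)
    (v : Fin n → F)
    (hW : IsLeast {w : ℕ | ∃ x : Fin n → F, x - v ∈ C ∧ hammingNorm x = w} 1) :
    Nat.card {x : Fin n → F // x - v ∈ C ∧ hammingNorm x = d - 1} =
      (n - 1).choose (d - 1) :=
  weight_one_coset_dminus1_count_general n k d F C hk hmds hd3 hdmin v hW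
end

section
/- Let q ≥ 5 be an odd prime power, let K be a conic in PG(2,q), P a point of K, and K* = K \ {P}. Then the q^2+1 points of PG(2,q) not on K* split into three classes: (q^2+q)/2 points each lying on exactly (q-1)/2 bisecants of K*, (q^2-q)/2 points each lying on exactly (q-3)/2 bisecants of K*, and the single point P lying on 0 bisecants of K*. -/
/-- The conic `{(1,t,t²) : t ∈ F_q} ∪ {(0,0,1)}` in `PG(2,q)`, i.e. the zero set of
the quadratic form `x₀x₂ = x₁²`. -/
def conicSet (F : Type*) [Field F] : Set (Projectivization F (Fin 3 → F)) :=
  {p | p.rep 0 * p.rep 2 = p.rep 1 ^ 2}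

/-- A point of `PG(2,q)` lies on a line (a 2-dimensional subspace of `F³`). -/
def onLine (F : Type*) [Field F] (p : Projectivization F (Fin 3 → F))
    (L : Submodule F (Fin 3 → F)) : Prop :=
  p.submodule ≤ L

/-- A line of `PG(2,q)`: a 2-dimensional linear subspace of `F³`. -/
def isLine (F : Type*) [Field F] (L : Submodule F (Fin 3 → F)) : Prop :=
  Module.finrank F L = 2

/-- A bisecant of a point set `S`: a line meeting `S` in exactly two points. -/
def isBisecant (F : Type*) [Field F] (S : Set (Projectivization F (Fin 3 → F)))
    (L : Submodule F (Fin 3 → F)) : Prop :=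
  isLine F L ∧ Nat.card {p : Projectivization F (Fin 3 → F) // p ∈ S ∧ onLine F p L} = 2

/-- A tangent (unisecant) of a point set `S`: a line meeting `S` in exactly one point. -/
def isTangent (F : Type*) [Field F] (S : Set (Projectivization F (Fin 3 → F)))
    (L : Submodule F (Fin 3 → F)) : Prop :=
  isLine F L ∧ Nat.card {p : Projectivization F (Fin 3 → F) // p ∈ S ∧ onLine F p L} = 1

/-- The number of bisecants of `S` through a point `p`. -/
noncomputable def bisecantCount (F : Type*) [Field F] (S : Set (Projectivization F (Fin 3 → F)))
    (p : Projectivization F (Fin 3 → F)) : ℕ :=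
  Nat.card {L : Submodule F (Fin 3 → F) // isBisecant F S L ∧ onLine F p L}

/-- The number of tangents of `S` through a point `p`. -/
noncomputable def tangentCount (F : Type*) [Field F] (S : Set (Projectivization F (Fin 3 → F)))
    (p : Projectivization F (Fin 3 → F)) : ℕ :=
  Nat.card {L : Submodule F (Fin 3 → F) // isTangent F S L ∧ onLine F p L}

/-- An external point of the conic: off the conic, lying on exactly two tangents. -/
def isExternal (F : Type*) [Field F] (p : Projectivization F (Fin 3 → F)) : Prop :=
  p ∉ conicSet F ∧ tangentCount F (conicSet F) p = 2

/-- An internal point of the conic: off the conic, lying on no tangent. -/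
def isInternal (F : Type*) [Field F] (p : Projectivization F (Fin 3 → F)) : Prop :=
  p ∉ conicSet F ∧ tangentCount F (conicSet F) p = 0

/-!
Move `P` to `(0 : 0 : 1)` by a projectivity preserving the conic, so that `K*` consists of the
points `(1 : t : t²)`. The chord through `(1 : s : s²)` and `(1 : t : t²)` is the line
`x₀st - x₁(s + t) + x₂ = 0`, so the bisecants of `K*` through a point correspond to the
unordered pairs `{s, t}`, `s ≠ t`, solving this equation. A point `(1 : y : y² - d)` off the
conic (`d ≠ 0`) gives `(s - y)(t - y) = d`, with `q - 1 - #{x | x² = d}` ordered solutions;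
so it lies on `(q - 3)/2` or `(q - 1)/2` bisecants according as `d` is a square or not.
A point `(0 : 1 : z)` of the tangent at `(0 : 0 : 1)` gives `s + t = z`, hence `(q - 1)/2`
bisecants, and `(0 : 0 : 1)` itself lies on none. Half of the `q - 1` values of `d` are squares.
-/

open Projectivization
open scoped LinearAlgebra.Projectivization Pointwise

theorem Nat.card_eq_mul_of_card_fiber {α β : Type*} [Finite α] {f : α → β} {n : ℕ}
    (hf : ∀ b, Nat.card {a // f a = b} = n) : Nat.card α = n * Nat.card β := by
  rcases n.eq_zero_or_pos with rfl | hn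
  · have : IsEmpty α := ⟨fun a => (Nat.card_eq_zero.mp (hf (f a))).elim
      (fun h => h.false ⟨a, rfl⟩) (fun h => h.not_finite inferInstance)⟩
    simp
  · have : Finite β := Finite.of_surjective f fun b =>
      let ⟨a, ha⟩ := (Nat.card_pos_iff.mp ((hf b).symm ▸ hn)).1.some
      ⟨a, ha⟩
    have := Fintype.ofFinite β
    rw [Nat.card_congr (Equiv.sigmaFiberEquiv f).symm, Nat.card_sigma]
    simp [hf, mul_comm]

theorem Nat.card_subtype_eq_two {α : Type*} {p : α → Prop} {a b : α} (hab : a ≠ b)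
    (h : ∀ x, p x ↔ x = a ∨ x = b) : Nat.card {x // p x} = 2 := by
  rw [← Set.ncard_pair hab, ← Nat.card_coe_set_eq]
  exact Nat.card_congr (Equiv.subtypeEquivRight h)

theorem Nat.card_subtype_and_add_card_subtype_and_not {α : Type*} [Finite α] (p q : α → Prop) :
    Nat.card {x // p x ∧ q x} + Nat.card {x // p x ∧ ¬q x} = Nat.card {x // p x} := by
  classical
  have := Fintype.ofFinite α
  simp only [Nat.card_eq_fintype_card, Fintype.card_subtype, ← Finset.filter_filter]
  exact Finset.card_filter_add_card_filter_not _

theorem Nat.card_subtype_ne {α : Type*} [Finite α] (a : α) :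
    Nat.card {x // x ≠ a} = Nat.card α - 1 := by
  classical
  have := Fintype.ofFinite α
  rw [Nat.card_eq_fintype_card, Nat.card_eq_fintype_card]
  exact Set.card_ne_eq a

theorem Nat.two_mul_mul_sub_one_div_two_add_of_odd {q : ℕ} (hq : Odd q) :
    2 * (q * ((q - 1) / 2)) + q = q ^ 2 := by
  obtain ⟨k, rfl⟩ := hq
  rw [show (2 * k + 1 - 1) / 2 = k by omega]
  ring

section FiniteField

variable {F : Type*} [Field F]

open scoped Classical in
theorem card_sq_eq (hF : ringChar F ≠ 2) {d : F} (hd : d ≠ 0) :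
    Nat.card {x : F // x ^ 2 = d} = if IsSquare d then 2 else 0 := by
  split_ifs with h
  · obtain ⟨e, rfl⟩ := h
    have he : e ≠ 0 := by rintro rfl; simp at hd
    refine Nat.card_subtype_eq_two (a := e) (b := -e) ?_ fun x => ?_
    · exact fun h => he ((Ring.eq_self_iff_eq_zero_of_char_ne_two hF).mp h.symm)
    · rw [← sq, sq_eq_sq_iff_eq_or_eq_neg]
  · have : IsEmpty {x : F // x ^ 2 = d} := ⟨fun ⟨x, hx⟩ => h ⟨x, by rw [← hx, sq]⟩⟩
    exact Nat.card_of_isEmpty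

variable [Finite F]

theorem ringChar_ne_two_of_odd_card (h : Odd (Nat.card F)) : ringChar F ≠ 2 := fun h2 => by
  have := Fintype.ofFinite F
  rw [Nat.card_eq_fintype_card, Nat.odd_iff, FiniteField.even_card_of_char_two h2] at h
  exact zero_ne_one h

theorem two_mul_card_isSquare (hF : ringChar F ≠ 2) :
    2 * Nat.card {d : F // d ≠ 0 ∧ IsSquare d} = Nat.card F - 1 := by
  rw [← Nat.card_subtype_ne (0 : F)]
  refine (Nat.card_eq_mul_of_card_fiber
    (f := fun x : {x : F // x ≠ 0} => ⟨x.1 ^ 2, pow_ne_zero 2 x.2, x.1, sq x.1⟩) ?_).symm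
  rintro ⟨d, hd, hsq⟩
  simp only [Subtype.ext_iff]
  rw [Nat.card_congr (Equiv.subtypeSubtypeEquivSubtype fun {x} (hx : x ^ 2 = d) =>
    fun h0 => hd (by rw [← hx, h0, zero_pow two_ne_zero])), card_sq_eq hF hd, if_pos hsq]

theorem two_mul_card_not_isSquare (hF : ringChar F ≠ 2) :
    2 * Nat.card {d : F // ¬IsSquare d} = Nat.card F - 1 := by
  have hsplit := Nat.card_subtype_and_add_card_subtype_and_not (fun d : F => d ≠ 0) IsSquare
  have hns : Nat.card {d : F // d ≠ 0 ∧ ¬IsSquare d} = Nat.card {d : F // ¬IsSquare d} :=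
    Nat.card_congr (Equiv.subtypeEquivRight fun d =>
      and_iff_right_of_imp fun h h0 => h (h0 ▸ IsSquare.zero))
  rw [hns, Nat.card_subtype_ne] at hsplit
  have := two_mul_card_isSquare hF
  omega

open scoped Classical in
theorem card_ne_zero_and_ite_isSquare (hF : ringChar F ≠ 2) (A B : ℕ) (C : ℕ → Prop) :
    Nat.card {d : F // d ≠ 0 ∧ C (if IsSquare d then A else B)} =
      (if C A then (Nat.card F - 1) / 2 else 0) + (if C B then (Nat.card F - 1) / 2 else 0) := by
  rw [← Nat.card_subtype_and_add_card_subtype_and_not _ IsSquare]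
  have hsq := two_mul_card_isSquare hF
  have hnsq := two_mul_card_not_isSquare hF
  congr 1
  · split_ifs with h
    · have : Nat.card {d : F // (d ≠ 0 ∧ C (if IsSquare d then A else B)) ∧ IsSquare d} =
          Nat.card {d : F // d ≠ 0 ∧ IsSquare d} :=
        Nat.card_congr <| Equiv.subtypeEquivRight fun d => by
          by_cases hd : IsSquare d <;> simp [hd, h]
      omega
    · have : IsEmpty {d : F // (d ≠ 0 ∧ C (if IsSquare d then A else B)) ∧ IsSquare d} :=
        ⟨fun ⟨d, ⟨_, hC⟩, hd⟩ => h (by simpa [hd] using hC)⟩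
      simp
  · split_ifs with h
    · have : Nat.card {d : F // (d ≠ 0 ∧ C (if IsSquare d then A else B)) ∧ ¬IsSquare d} =
          Nat.card {d : F // ¬IsSquare d} :=
        Nat.card_congr <| Equiv.subtypeEquivRight fun d => by
          by_cases hd : IsSquare d <;> simp [hd, h]
          rintro rfl
          exact hd IsSquare.zero
      omega
    · have : IsEmpty {d : F // (d ≠ 0 ∧ C (if IsSquare d then A else B)) ∧ ¬IsSquare d} :=
        ⟨fun ⟨d, ⟨_, hC⟩, hd⟩ => h (by simpa [hd] using hC)⟩
      simp

theorem card_ne_and_mul_eq {d : F} (hd : d ≠ 0) :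
    Nat.card {ab : F × F // ab.1 ≠ ab.2 ∧ ab.1 * ab.2 = d} =
      Nat.card F - 1 - Nat.card {x : F // x ^ 2 = d} := by
  have hroots : Nat.card {x : F // x ≠ 0 ∧ x ^ 2 = d} = Nat.card {x : F // x ^ 2 = d} :=
    Nat.card_congr (Equiv.subtypeEquivRight fun x =>
      and_iff_right_of_imp fun hx h0 => hd (by rw [← hx, h0, zero_pow two_ne_zero]))
  have hsplit := Nat.card_subtype_and_add_card_subtype_and_not (fun x : F => x ≠ 0) (· ^ 2 = d)
  rw [hroots, Nat.card_subtype_ne] at hsplit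
  rw [← hsplit, Nat.add_sub_cancel_left]
  have ne_zero {a b : F} (h : a * b = d) : a ≠ 0 := fun h0 => hd (by simp [← h, h0])
  exact Nat.card_congr
    { toFun := fun ab => ⟨ab.1.1, ne_zero ab.2.2, fun h => ab.2.1 <|
        mul_left_cancel₀ (ne_zero ab.2.2) (by rw [← sq, h, ab.2.2])⟩
      invFun := fun a => ⟨(a.1, d / a.1), fun h : a.1 = d / a.1 =>
        a.2.2 (by rw [sq]; nth_rewrite 2 [h]; exact mul_div_cancel₀ d a.2.1),
        mul_div_cancel₀ d a.2.1⟩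
      left_inv := fun ⟨⟨a, b⟩, _, hab⟩ => Subtype.ext <| Prod.ext rfl
        (eq_div_of_mul_eq (ne_zero hab) (by rw [mul_comm, hab])).symm
      right_inv := fun a => rfl }

theorem card_ne_and_add_eq (h2 : (2 : F) ≠ 0) (z : F) :
    Nat.card {ab : F × F // ab.1 ≠ ab.2 ∧ ab.1 + ab.2 = z} = Nat.card F - 1 := by
  rw [← Nat.card_subtype_ne (z / 2)]
  have hz (a : F) : a = z - a ↔ a = z / 2 := by
    rw [eq_sub_iff_add_eq, ← two_mul, eq_div_iff h2, mul_comm]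
  exact Nat.card_congr
    { toFun := fun ⟨⟨a, b⟩, hab, habz⟩ =>
        ⟨a, by rw [ne_eq, ← hz, ← habz, add_sub_cancel_left]; exact hab⟩
      invFun := fun a => ⟨(a.1, z - a.1), (hz a.1).not.mpr a.2, add_sub_cancel _ _⟩
      left_inv := fun ⟨⟨a, b⟩, _, hab⟩ => Subtype.ext (Prod.ext rfl (eq_sub_of_add_eq' hab).symm)
      right_inv := fun a => rfl }

end FiniteField

section Transfer

variable {F : Type*} [Field F]

theorem onLine_mk_iff {v : Fin 3 → F} (hv : v ≠ 0) (L : Submodule F (Fin 3 → F)) :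
    onLine F (mk F v hv) L ↔ v ∈ L := by
  rw [onLine, submodule_mk, Submodule.span_singleton_le_iff_mem]

variable (g : (Fin 3 → F) ≃ₗ[F] (Fin 3 → F))

theorem onLine_smul_map (p : ℙ F (Fin 3 → F)) (L : Submodule F (Fin 3 → F)) :
    onLine F (g • p) (L.map g.toLinearMap) ↔ onLine F p L := by
  induction p using Projectivization.ind with | h v hv =>
  rw [smul_mk, onLine_mk_iff, onLine_mk_iff, LinearEquiv.smul_def, Submodule.mem_map_equiv,
    LinearEquiv.symm_apply_apply]

theorem isBisecant_smul_map (S : Set (ℙ F (Fin 3 → F))) (L : Submodule F (Fin 3 → F)) :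
    isBisecant F (g • S) (L.map g.toLinearMap) ↔ isBisecant F S L := by
  have e : {p // p ∈ S ∧ onLine F p L} ≃ {p // p ∈ g • S ∧ onLine F p (L.map g.toLinearMap)} :=
    (MulAction.toPerm g).subtypeEquiv fun p => by
      simp [Set.smul_mem_smul_set_iff, onLine_smul_map]
  simp only [isBisecant, isLine, LinearEquiv.finrank_map_eq, ← Nat.card_congr e]

theorem bisecantCount_smul (S : Set (ℙ F (Fin 3 → F))) (p : ℙ F (Fin 3 → F)) :
    bisecantCount F (g • S) (g • p) = bisecantCount F S p :=
  Nat.card_congr <| ((Submodule.orderIsoMapComap g).toEquiv.subtypeEquiv fun L => by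
    simp [isBisecant_smul_map, onLine_smul_map]).symm

end Transfer

section Conic

variable {F : Type*} [Field F]

theorem mk_mem_conicSet_iff {v : Fin 3 → F} (hv : v ≠ 0) :
    mk F v hv ∈ conicSet F ↔ v 0 * v 2 = v 1 ^ 2 := by
  obtain ⟨a, ha⟩ := exists_smul_eq_mk_rep F v hv
  simp only [conicSet, Set.mem_ofPred_eq, ← ha, Pi.smul_apply, Units.smul_def, smul_eq_mul]
  rw [← sub_eq_zero, ← sub_eq_zero (a := v 0 * v 2)]
  have : (a : F) * v 0 * ((a : F) * v 2) - ((a : F) * v 1) ^ 2 =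
      (a : F) ^ 2 * (v 0 * v 2 - v 1 ^ 2) := by ring
  simp [this, a.ne_zero]

def conicVec (t : F) : Fin 3 → F := ![1, t, t ^ 2]

theorem conicVec_ne_zero (t : F) : conicVec t ≠ 0 :=
  fun h => one_ne_zero (congrFun h 0)

def conicPoint (t : F) : ℙ F (Fin 3 → F) := mk F (conicVec t) (conicVec_ne_zero t)

variable (F) in
def infinitePoint : ℙ F (Fin 3 → F) := mk F ![0, 0, 1] fun h => one_ne_zero (congrFun h 2)

theorem conicPoint_injective : Function.Injective (conicPoint (F := F)) := by
  intro s t h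
  obtain ⟨a, ha⟩ := (mk_eq_mk_iff _ _ _ _ _).mp h
  have h0 := congrFun ha 0
  have h1 := congrFun ha 1
  simp only [conicVec, Units.smul_def, Pi.smul_apply, smul_eq_mul] at h0 h1
  simp_all

theorem conicPoint_ne_infinitePoint (t : F) : conicPoint t ≠ infinitePoint F := by
  intro h
  obtain ⟨a, ha⟩ := (mk_eq_mk_iff _ _ _ _ _).mp h
  simpa [conicVec, Units.smul_def] using congrFun ha 0

theorem conicSet_eq : conicSet F = insert (infinitePoint F) (Set.range conicPoint) := by
  ext p
  constructor
  · induction p using Projectivization.ind with | h v hv =>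
    rw [mk_mem_conicSet_iff, Set.mem_insert_iff, Set.mem_range]
    intro hc
    by_cases h0 : v 0 = 0
    · left
      have h1 : v 1 = 0 := by simpa [h0] using hc.symm
      have h2 : v 2 ≠ 0 := fun h2 => hv (by ext i; fin_cases i <;> simp [h0, h1, h2])
      refine (mk_eq_mk_iff _ _ _ _ _).mpr ⟨Units.mk0 (v 2) h2, ?_⟩
      ext i; fin_cases i <;> simp [h0, h1]
    · right
      refine ⟨v 1 / v 0, (mk_eq_mk_iff' _ _ _ _ _).mpr ⟨(v 0)⁻¹, ?_⟩⟩
      ext i; fin_cases i <;> simp [conicVec] <;> field_simp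
      linear_combination hc
  · rintro (rfl | ⟨t, rfl⟩) <;> simp [infinitePoint, conicPoint, mk_mem_conicSet_iff, conicVec]

theorem conicSet_diff_infinitePoint :
    conicSet F \ {infinitePoint F} = Set.range conicPoint := by
  rw [conicSet_eq, Set.insert_sdiff_self_of_notMem]
  rintro ⟨t, ht⟩
  exact conicPoint_ne_infinitePoint t ht

theorem smul_conicSet {g : (Fin 3 → F) ≃ₗ[F] (Fin 3 → F)}
    (hg : ∀ v, g v 0 * g v 2 = g v 1 ^ 2 ↔ v 0 * v 2 = v 1 ^ 2) :
    g • conicSet F = conicSet F := by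
  ext p
  induction p using Projectivization.ind with | h v hv =>
  rw [Set.mem_smul_set_iff_inv_smul_mem, smul_mk, mk_mem_conicSet_iff, mk_mem_conicSet_iff,
    ← hg, LinearEquiv.smul_def]
  simp

-- The translation `t ↦ t - a` of the conic parameter followed by the swap `x₀ ↔ x₂`; both
-- preserve `x₀x₂ - x₁²`.
def conicToInfinity (a : F) : (Fin 3 → F) ≃ₗ[F] (Fin 3 → F) where
  toFun v := ![a ^ 2 * v 0 - 2 * a * v 1 + v 2, v 1 - a * v 0, v 0]
  invFun w := ![w 2, w 1 + a * w 2, w 0 + 2 * a * w 1 + a ^ 2 * w 2]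
  map_add' u v := by ext i; fin_cases i <;> simp <;> ring
  map_smul' c v := by ext i; fin_cases i <;> simp <;> ring
  left_inv v := by ext i; fin_cases i <;> simp; ring
  right_inv w := by ext i; fin_cases i <;> simp; ring

theorem exists_smul_conicSet_diff {P : ℙ F (Fin 3 → F)} (hP : P ∈ conicSet F) :
    ∃ g : (Fin 3 → F) ≃ₗ[F] (Fin 3 → F),
      g • (conicSet F \ {P}) = conicSet F \ {infinitePoint F} ∧ g • P = infinitePoint F := by
  suffices ∃ g : (Fin 3 → F) ≃ₗ[F] (Fin 3 → F),
      g • conicSet F = conicSet F ∧ g • P = infinitePoint F by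
    obtain ⟨g, hK, hP⟩ := this
    exact ⟨g, by rw [Set.smul_set_sdiff, Set.smul_set_singleton, hK, hP], hP⟩
  rw [conicSet_eq] at hP
  rcases hP with rfl | ⟨a, rfl⟩
  · exact ⟨1, one_smul _ _, one_smul _ _⟩
  refine ⟨conicToInfinity a, smul_conicSet fun v => ?_, ?_⟩
  · simp only [conicToInfinity, LinearEquiv.coe_mk, LinearMap.coe_mk, AddHom.coe_mk,
      Matrix.cons_val_zero, Matrix.cons_val_one, Matrix.cons_val]
    constructor <;> intro h <;> linear_combination h
  · rw [conicPoint, smul_mk, infinitePoint, mk_eq_mk_iff' _ _ _ _ _]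
    exact ⟨1, by ext i; fin_cases i <;> simp [conicToInfinity, conicVec]; ring⟩

end Conic

section Chords

variable {F : Type*} [Field F]

def chord (s t : F) : Submodule F (Fin 3 → F) := Submodule.span F {conicVec s, conicVec t}

-- `(st, -(s + t), 1)` is the cross product of `conicVec s` and `conicVec t`, divided by `t - s`.
theorem mem_chord_iff {s t : F} (hst : s ≠ t) (v : Fin 3 → F) :
    v ∈ chord s t ↔ v 0 * (s * t) - v 1 * (s + t) + v 2 = 0 := by
  rw [chord, Submodule.mem_span_pair]
  constructor
  · rintro ⟨a, b, rfl⟩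
    simp only [conicVec, Matrix.smul_cons, smul_eq_mul, mul_one, Matrix.smul_empty, Pi.add_apply,
      Matrix.cons_val_zero, Matrix.cons_val_one, Matrix.cons_val]
    ring
  · intro h
    refine ⟨(v 1 - t * v 0) / (s - t), (s * v 0 - v 1) / (s - t), ?_⟩
    ext i
    fin_cases i <;> simp [conicVec] <;> field_simp
    · ring
    · ring
    · linear_combination (t - s) * h

theorem conicVec_mem_chord_iff {s t : F} (hst : s ≠ t) (u : F) :
    conicVec u ∈ chord s t ↔ u = s ∨ u = t := by
  have : conicVec u 0 * (s * t) - conicVec u 1 * (s + t) + conicVec u 2 = (u - s) * (u - t) := by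
    simp only [conicVec, Matrix.cons_val_zero, Matrix.cons_val_one, Matrix.cons_val]
    ring
  rw [mem_chord_iff hst, this, mul_eq_zero, sub_eq_zero, sub_eq_zero]

theorem finrank_chord {s t : F} (hst : s ≠ t) : Module.finrank F (chord s t) = 2 := by
  have hli : LinearIndependent F ![conicVec s, conicVec t] := by
    rw [LinearIndependent.pair_iff]
    intro a b hab
    have h0 := congrFun hab 0
    have h1 := congrFun hab 1
    simp only [conicVec, Matrix.smul_cons, smul_eq_mul, mul_one, Matrix.smul_empty, Pi.add_apply,
      Matrix.cons_val_zero, Pi.zero_apply, Matrix.cons_val_one] at h0 h1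
    have : a * (s - t) = 0 := by linear_combination h1 - t * h0
    have ha : a = 0 := (mul_eq_zero.mp this).resolve_right (sub_ne_zero.mpr hst)
    exact ⟨ha, by simpa [ha] using h0⟩
  have := finrank_span_eq_card hli
  rwa [Matrix.range_cons_cons_empty, Fintype.card_fin] at this

theorem card_conicSet_diff_onLine (L : Submodule F (Fin 3 → F)) :
    Nat.card {p // p ∈ conicSet F \ {infinitePoint F} ∧ onLine F p L} =
      Nat.card {t : F // conicVec t ∈ L} := by
  have : {p | p ∈ conicSet F \ {infinitePoint F} ∧ onLine F p L} =
      conicPoint '' {t | conicVec t ∈ L} := by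
    ext p
    rw [conicSet_diff_infinitePoint]
    constructor
    · rintro ⟨⟨t, rfl⟩, hL⟩
      exact ⟨t, (onLine_mk_iff _ L).mp hL, rfl⟩
    · rintro ⟨t, ht, rfl⟩
      exact ⟨⟨t, rfl⟩, (onLine_mk_iff _ L).mpr ht⟩
  exact (congrArg (fun s : Set _ => Nat.card s) this).trans
    (Nat.card_image_of_injective conicPoint_injective _)

theorem isBisecant_chord {s t : F} (hst : s ≠ t) :
    isBisecant F (conicSet F \ {infinitePoint F}) (chord s t) := by
  refine ⟨finrank_chord hst, ?_⟩
  rw [card_conicSet_diff_onLine]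
  exact Nat.card_subtype_eq_two hst (conicVec_mem_chord_iff hst)

theorem isBisecant_iff_exists_chord (L : Submodule F (Fin 3 → F)) :
    isBisecant F (conicSet F \ {infinitePoint F}) L ↔ ∃ s t, s ≠ t ∧ chord s t = L := by
  refine ⟨fun ⟨hL, hcard⟩ => ?_, fun ⟨s, t, hst, hL⟩ => hL ▸ isBisecant_chord hst⟩
  rw [card_conicSet_diff_onLine, Nat.card_eq_two_iff] at hcard
  obtain ⟨⟨s, hs⟩, ⟨t, ht⟩, hst, -⟩ := hcard
  have hst : s ≠ t := fun h => hst (Subtype.ext h)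
  refine ⟨s, t, hst, Submodule.eq_of_le_of_finrank_eq ?_ ?_⟩
  · exact Submodule.span_le.mpr (Set.insert_subset hs (Set.singleton_subset_iff.mpr ht))
  · rw [finrank_chord hst, hL]

theorem chord_eq_chord_iff {s t s' t' : F} (hst : s ≠ t) (hst' : s' ≠ t') :
    chord s' t' = chord s t ↔ (s', t') = (s, t) ∨ (s', t') = (t, s) := by
  constructor
  · intro h
    have hs' := (conicVec_mem_chord_iff hst s').mp (h ▸ Submodule.subset_span (by simp))
    have ht' := (conicVec_mem_chord_iff hst t').mp (h ▸ Submodule.subset_span (by simp))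
    rcases hs' with rfl | rfl <;> rcases ht' with rfl | rfl <;> simp_all
  · rintro (h | h) <;> simp only [Prod.mk.injEq] at h <;> rw [h.1, h.2]
    rw [chord, chord, Set.pair_comm]

theorem two_mul_bisecantCount [Finite F] {w : Fin 3 → F} (hw : w ≠ 0) :
    2 * bisecantCount F (conicSet F \ {infinitePoint F}) (mk F w hw) =
      Nat.card {st : F × F // st.1 ≠ st.2 ∧
        w 0 * (st.1 * st.2) - w 1 * (st.1 + st.2) + w 2 = 0} := by
  refine (Nat.card_eq_mul_of_card_fiber (f := fun st => ⟨chord st.1.1 st.1.2,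
    isBisecant_chord st.2.1, (onLine_mk_iff hw _).mpr ((mem_chord_iff st.2.1 w).mpr st.2.2)⟩)
    ?_).symm
  rintro ⟨L, hL, hwL⟩
  obtain ⟨s, t, hst, rfl⟩ := (isBisecant_iff_exists_chord _).mp hL
  have hwst := (mem_chord_iff hst w).mp ((onLine_mk_iff hw _).mp hwL)
  refine Nat.card_subtype_eq_two (a := ⟨(s, t), hst, hwst⟩)
    (b := ⟨(t, s), hst.symm, by linear_combination hwst⟩) (by simp [hst]) fun x => ?_
  simp only [Subtype.ext_iff, chord_eq_chord_iff hst x.2.1]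

end Chords

section Points

variable {F : Type*} [Field F]

-- `d` is the value of `x₁² - x₀x₂`, which vanishes exactly on the conic.
def affinePoint (y d : F) : ℙ F (Fin 3 → F) :=
  mk F ![1, y, y ^ 2 - d] fun h => one_ne_zero (congrFun h 0)

-- The line `x₀ = 0` is the tangent to the conic at `infinitePoint F`.
def tangentPoint (z : F) : ℙ F (Fin 3 → F) :=
  mk F ![0, 1, z] fun h => one_ne_zero (congrFun h 1)

theorem affinePoint_mem_iff (y d : F) :
    affinePoint y d ∈ conicSet F \ {infinitePoint F} ↔ d = 0 := by
  constructor
  · rintro ⟨h, -⟩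
    rw [affinePoint, mk_mem_conicSet_iff] at h
    simpa using h
  · rintro rfl
    rw [conicSet_diff_infinitePoint]
    exact ⟨y, by simp [affinePoint, conicPoint, conicVec]⟩

theorem tangentPoint_notMem (z : F) : tangentPoint z ∉ conicSet F := by
  rw [tangentPoint, mk_mem_conicSet_iff]
  simp

theorem bisecantCount_infinitePoint :
    bisecantCount F (conicSet F \ {infinitePoint F}) (infinitePoint F) = 0 := by
  refine Nat.card_eq_zero.mpr (Or.inl ⟨fun ⟨L, hL, hP⟩ => ?_⟩)
  obtain ⟨s, t, hst, rfl⟩ := (isBisecant_iff_exists_chord L).mp hL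
  rw [infinitePoint, onLine_mk_iff, mem_chord_iff hst] at hP
  simp at hP

theorem bisecantCount_conicSet_diff_self {P : ℙ F (Fin 3 → F)} (hP : P ∈ conicSet F) :
    bisecantCount F (conicSet F \ {P}) P = 0 := by
  obtain ⟨g, hK, hgP⟩ := exists_smul_conicSet_diff hP
  rw [← bisecantCount_smul g, hK, hgP, bisecantCount_infinitePoint]

variable [Finite F]

theorem two_mul_bisecantCount_affinePoint (y d : F) :
    2 * bisecantCount F (conicSet F \ {infinitePoint F}) (affinePoint y d) =
      Nat.card {ab : F × F // ab.1 ≠ ab.2 ∧ ab.1 * ab.2 = d} := by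
  rw [affinePoint, two_mul_bisecantCount]
  refine Nat.card_congr ((Equiv.prodCongr (Equiv.subRight y) (Equiv.subRight y)).subtypeEquiv
    fun st => and_congr (sub_left_injective.ne_iff.symm) ?_)
  simp only [Matrix.cons_val_zero, Matrix.cons_val_one, Matrix.cons_val, Equiv.prodCongr_apply,
    Prod.map_fst, Prod.map_snd, Equiv.subRight_apply]
  constructor <;> intro h <;> linear_combination h

open scoped Classical in
theorem bisecantCount_affinePoint (hF : ringChar F ≠ 2) (y : F) {d : F} (hd : d ≠ 0) :
    bisecantCount F (conicSet F \ {infinitePoint F}) (affinePoint y d) =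
      if IsSquare d then (Nat.card F - 3) / 2 else (Nat.card F - 1) / 2 := by
  have h := two_mul_bisecantCount_affinePoint y d
  rw [card_ne_and_mul_eq hd, card_sq_eq hF hd] at h
  split_ifs at h ⊢ <;> omega

theorem bisecantCount_tangentPoint (hF : ringChar F ≠ 2) (z : F) :
    bisecantCount F (conicSet F \ {infinitePoint F}) (tangentPoint z) = (Nat.card F - 1) / 2 := by
  have h := two_mul_bisecantCount (F := F) (w := ![0, 1, z]) fun h => one_ne_zero (congrFun h 1)
  rw [← tangentPoint, Nat.card_congr (Equiv.subtypeEquivRight fun st => and_congr_right fun _ =>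
    show 0 * (st.1 * st.2) - 1 * (st.1 + st.2) + z = 0 ↔ st.1 + st.2 = z by
      rw [← sub_eq_zero (b := z)]; constructor <;> intro h <;> linear_combination -h),
    card_ne_and_add_eq (Ring.two_ne_zero hF) z] at h
  omega

end Points

section Counting

variable {F : Type*} [Field F]

def planePoint : (F × F) ⊕ F ⊕ Unit → ℙ F (Fin 3 → F)
  | .inl (y, d) => affinePoint y d
  | .inr (.inl z) => tangentPoint z
  | .inr (.inr ()) => infinitePoint F

theorem planePoint_injective : Function.Injective (planePoint (F := F)) := by
  rintro (⟨y, d⟩ | z | ⟨⟩) (⟨y', d'⟩ | z' | ⟨⟩) h <;>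
    obtain ⟨a, ha⟩ := (mk_eq_mk_iff' _ _ _ _ _).mp h <;>
    have h0 := congrFun ha 0 <;> have h1 := congrFun ha 1 <;> have h2 := congrFun ha 2 <;>
    simp at h0 h1 h2 <;> simp_all

theorem planePoint_surjective : Function.Surjective (planePoint (F := F)) := by
  intro p
  induction p using Projectivization.ind with | h v hv =>
  by_cases h0 : v 0 = 0
  · by_cases h1 : v 1 = 0
    · have h2 : v 2 ≠ 0 := fun h2 => hv (by ext i; fin_cases i <;> simp [h0, h1, h2])
      refine ⟨.inr (.inr ()), (mk_eq_mk_iff' _ _ _ _ _).mpr ⟨(v 2)⁻¹, ?_⟩⟩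
      ext i; fin_cases i <;> simp [h0, h1, h2]
    · refine ⟨.inr (.inl (v 2 / v 1)), (mk_eq_mk_iff' _ _ _ _ _).mpr ⟨(v 1)⁻¹, ?_⟩⟩
      ext i; fin_cases i <;> simp [h0, h1]; field_simp
  · refine ⟨.inl (v 1 / v 0, (v 1 / v 0) ^ 2 - v 2 / v 0),
      (mk_eq_mk_iff' _ _ _ _ _).mpr ⟨(v 0)⁻¹, ?_⟩⟩
    ext i; fin_cases i <;> simp [h0] <;> field_simp

variable [Finite F]

open scoped Classical in
theorem card_subtype_eq_affine_add_tangent_add_infinitePoint (C : ℙ F (Fin 3 → F) → Prop) :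
    Nat.card {p // C p} = Nat.card {yd : F × F // C (affinePoint yd.1 yd.2)} +
      Nat.card {z : F // C (tangentPoint z)} + if C (infinitePoint F) then 1 else 0 := by
  have hplane : Nat.card {x // C (planePoint x)} = Nat.card {p // C p} :=
    Nat.card_congr ((Equiv.ofBijective _ ⟨planePoint_injective, planePoint_surjective⟩).subtypeEquiv
      fun _ => Iff.rfl)
  rw [← hplane, Nat.card_congr Equiv.subtypeSum, Nat.card_sum,
    Nat.card_congr Equiv.subtypeSum, Nat.card_sum, add_assoc]
  congr 2
  split_ifs with h <;> simp [Fintype.card_subtype, Finset.filter_singleton, planePoint, h]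

open scoped Classical in
theorem card_notMem_conicSet_diff_infinitePoint (hq : Odd (Nat.card F)) (C : ℕ → Prop) :
    Nat.card {p // p ∉ conicSet F \ {infinitePoint F} ∧
        C (bisecantCount F (conicSet F \ {infinitePoint F}) p)} =
      (if C ((Nat.card F - 1) / 2) then (Nat.card F ^ 2 + Nat.card F) / 2 else 0) +
      (if C ((Nat.card F - 3) / 2) then (Nat.card F ^ 2 - Nat.card F) / 2 else 0) +
      (if C 0 then 1 else 0) := by
  have hF := ringChar_ne_two_of_odd_card hq
  have haffine : Nat.card {yd : F × F // affinePoint yd.1 yd.2 ∉ conicSet F \ {infinitePoint F} ∧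
      C (bisecantCount F (conicSet F \ {infinitePoint F}) (affinePoint yd.1 yd.2))} =
      Nat.card F * Nat.card {d : F // d ≠ 0 ∧
        C (if IsSquare d then (Nat.card F - 3) / 2 else (Nat.card F - 1) / 2)} := by
    rw [mul_comm, ← Nat.card_prod]
    refine Nat.card_congr (((Equiv.prodComm F F).subtypeEquiv fun yd => ?_).trans
      Equiv.prodSubtypeFstEquivSubtypeProd)
    rw [affinePoint_mem_iff]
    exact and_congr_right fun hd => by rw [bisecantCount_affinePoint hF _ hd]; rfl
  have htangent : Nat.card {z : F // tangentPoint z ∉ conicSet F \ {infinitePoint F} ∧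
      C (bisecantCount F (conicSet F \ {infinitePoint F}) (tangentPoint z))} =
      if C ((Nat.card F - 1) / 2) then Nat.card F else 0 := by
    rw [Nat.card_congr (Equiv.subtypeEquivRight (q := fun _ => C ((Nat.card F - 1) / 2))
      fun z => by
        rw [bisecantCount_tangentPoint hF]
        exact and_iff_right fun h => tangentPoint_notMem z h.1)]
    split_ifs with h <;> simp [h]
  rw [card_subtype_eq_affine_add_tangent_add_infinitePoint, haffine, htangent,
    card_ne_zero_and_ite_isSquare hF]
  have := Nat.two_mul_mul_sub_one_div_two_add_of_odd hq
  simp only [bisecantCount_infinitePoint, Set.mem_sdiff, Set.mem_singleton_iff, not_true_eq_false,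
    and_false, not_false_eq_true, true_and, mul_add]
  split_ifs <;> omega

open scoped Classical in
theorem card_notMem_conicSet_diff (hq : Odd (Nat.card F)) {P : ℙ F (Fin 3 → F)}
    (hP : P ∈ conicSet F) (C : ℕ → Prop) :
    Nat.card {p // p ∉ conicSet F \ {P} ∧ C (bisecantCount F (conicSet F \ {P}) p)} =
      (if C ((Nat.card F - 1) / 2) then (Nat.card F ^ 2 + Nat.card F) / 2 else 0) +
      (if C ((Nat.card F - 3) / 2) then (Nat.card F ^ 2 - Nat.card F) / 2 else 0) +
      (if C 0 then 1 else 0) := by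
  obtain ⟨g, hK, -⟩ := exists_smul_conicSet_diff hP
  rw [← card_notMem_conicSet_diff_infinitePoint hq C, ← hK]
  exact Nat.card_congr ((MulAction.toPerm g).subtypeEquiv fun p => by
    simp [Set.smul_mem_smul_set_iff, bisecantCount_smul])

end Counting

/-- Proposition 5.4(i): let `q ≥ 5` be odd (a prime power, being the cardinality of a
field), `K` the conic in `PG(2,q)`, `P ∈ K`, and `K* = K \ {P}`. The `q²+1` points off
`K*` split into: `(q²+q)/2` points each on exactly `(q-1)/2` bisecants of `K*`,
`(q²-q)/2` points each on exactly `(q-3)/2` bisecants of `K*`, and the single point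
`P` on `0` bisecants of `K*`. -/
theorem shortened_conic_point_classes (F : Type) [Field F] [Fintype F] (q : ℕ)
    (hq : Fintype.card F = q) (hq5 : 5 ≤ q) (hodd : Odd q)
    (P : Projectivization F (Fin 3 → F)) (hP : P ∈ conicSet F) :
    Nat.card {p : Projectivization F (Fin 3 → F) // p ∉ conicSet F \ {P}} = q ^ 2 + 1 ∧
    Nat.card {p : Projectivization F (Fin 3 → F) // p ∉ conicSet F \ {P} ∧
        bisecantCount F (conicSet F \ {P}) p = (q - 1) / 2} = (q ^ 2 + q) / 2 ∧
    Nat.card {p : Projectivization F (Fin 3 → F) // p ∉ conicSet F \ {P} ∧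
        bisecantCount F (conicSet F \ {P}) p = (q - 3) / 2} = (q ^ 2 - q) / 2 ∧
    bisecantCount F (conicSet F \ {P}) P = 0 ∧
    Nat.card {p : Projectivization F (Fin 3 → F) // p ∉ conicSet F \ {P} ∧
        bisecantCount F (conicSet F \ {P}) p = 0} = 1 := by
  have hcard : Nat.card F = q := Nat.card_eq_fintype_card.trans hq
  have count := card_notMem_conicSet_diff (hcard ▸ hodd) hP
  rw [hcard] at count
  have h31 : (q - 3) / 2 ≠ (q - 1) / 2 := by omega
  have h30 : (q - 3) / 2 ≠ 0 := by omega
  have h10 : (q - 1) / 2 ≠ 0 := by omega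
  refine ⟨?_, ?_, ?_, bisecantCount_conicSet_diff_self hP, ?_⟩
  · have total := count fun _ => True
    simp only [and_true, if_true] at total
    have := Nat.two_mul_mul_sub_one_div_two_add_of_odd hodd
    omega
  · simpa [h31, h10.symm] using count (· = (q - 1) / 2)
  · simpa [h31.symm, h30.symm] using count (· = (q - 3) / 2)
  · simpa [show ¬q ≤ 2 by omega, show ¬q ≤ 4 by omega] using count (· = 0)
end
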